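/- Let p be prime and V ⊆ (Z/pZ)^r finite. Suppose that for every nonzero u ∈ (Z/pZ)^r the exponential sum satisfies |∑_{z ∈ V} e^{2πi (u·z)/p}| ≤ K. Let B = I_1 × ... × I_r be a box of intervals. Then ∑_{x ∈ (Z/pZ)^r} |N_{B_x}(V) - |V|·vol(B)/p^r|² ≤ K²·vol(B). -/

import Mathlib

/-!
For a finite abelian group `G`, write `N(x) = #{v ∈ V | v - x ∈ B}` and
`S_A(ψ) = ∑_{a ∈ A} ψ a` for a character `ψ`. Expanding the indicator of `v - x ∈ B` in
characters gives
`|G| · (N(x) - |V||B|/|G|) = ∑_{ψ ≠ 0} S_V(ψ) · conj (S_B(ψ)) · conj (ψ x)`,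
the trivial character contributing exactly the mean `|V||B|`. Parseval in `x` turns the sum of
squares into `|G|⁻¹ ∑_{ψ ≠ 0} |S_V(ψ)|² |S_B(ψ)|² ≤ |G|⁻¹ K² ∑_ψ |S_B(ψ)|²`, and Parseval over
the dual group evaluates the last sum as `|G| |B|`. On `(ZMod p)^r` every character is
`z ↦ e_p(u · z)`, and it is trivial only for `u = 0`.
-/

open Finset

/-- The standard additive character `e_p(t) = e^{2πi t/p}` on `ZMod p`. -/
noncomputable def ep (p : ℕ) (t : ZMod p) : ℂ :=
  Complex.exp (2 * Real.pi * Complex.I * t.val / p)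

/-- The interval `{a, a+1, ..., a+L-1}` of `L` consecutive residues mod `p`. -/
def interval (p : ℕ) (a : ZMod p) (L : ℕ) : Finset (ZMod p) :=
  (Finset.range L).image fun m : ℕ => a + (m : ZMod p)

open ComplexConjugate

theorem sum_norm_sq_sum_mul_of_orthogonal {X ι : Type*} [Fintype X] [DecidableEq ι]
    (e : ι → X → ℂ) (M : ℝ)
    (he : ∀ i j, ∑ x, e i x * conj (e j x) = if i = j then (M : ℂ) else 0)
    (s : Finset ι) (c : ι → ℂ) :
    ∑ x, ‖∑ i ∈ s, c i * e i x‖ ^ 2 = M * ∑ i ∈ s, ‖c i‖ ^ 2 := by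
  suffices h : (∑ x, ‖∑ i ∈ s, c i * e i x‖ ^ 2 : ℝ) = ((M * ∑ i ∈ s, ‖c i‖ ^ 2 : ℝ) : ℂ) by
    exact_mod_cast h
  push_cast
  simp_rw [← Complex.mul_conj', map_sum, map_mul, sum_mul_sum]
  rw [sum_comm]
  calc ∑ i ∈ s, ∑ x, ∑ j ∈ s, c i * e i x * (conj (c j) * conj (e j x))
      = ∑ i ∈ s, ∑ j ∈ s, c i * conj (c j) * ∑ x, e i x * conj (e j x) := by
        refine sum_congr rfl fun i _ => ?_
        rw [sum_comm]
        simp_rw [mul_sum]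
        congr! 2; ring
    _ = ∑ i ∈ s, M * (c i * conj (c i)) := by
        refine sum_congr rfl fun i hi => ?_
        simp_rw [he, mul_ite, mul_zero, sum_ite_eq, if_pos hi]
        ring
    _ = _ := by rw [mul_sum]

namespace AddChar
variable {G : Type*} [AddCommGroup G] [Fintype G]

lemma apply_mul_conj_apply (ψ : AddChar G ℂ) (a b : G) : ψ a * conj (ψ b) = ψ (a - b) := by
  rw [sub_eq_add_neg, map_add_eq_mul, map_neg_eq_conj]

lemma sum_apply_mul_conj_apply (ψ φ : AddChar G ℂ) :
    ∑ x, ψ x * conj (φ x) = if ψ = φ then (Fintype.card G : ℂ) else 0 := by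
  classical
  have hdiff : ∀ x, ψ x * conj (φ x) = (ψ - φ) x := fun x => by
    rw [← map_neg_eq_conj, sub_eq_add_neg, add_apply, neg_apply]
  simp_rw [hdiff, sum_eq_ite, sub_eq_zero]

lemma sum_apply_mul_conj_apply_dual [DecidableEq G] (a b : G) :
    ∑ ψ : AddChar G ℂ, ψ a * conj (ψ b) = if a = b then (Fintype.card G : ℂ) else 0 := by
  simp_rw [apply_mul_conj_apply, sum_apply_eq_ite, sub_eq_zero]

variable [DecidableEq G]

lemma card_mul_card_filter_sub_mem (V B : Finset G) (x : G) :
    (Fintype.card G : ℂ) * #{v ∈ V | v - x ∈ B} =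
      ∑ ψ : AddChar G ℂ, (∑ v ∈ V, ψ v) * conj (∑ b ∈ B, ψ b) * conj (ψ x) := by
  have hcount : (#{v ∈ V | v - x ∈ B} : ℂ) = ∑ v ∈ V, ∑ b ∈ B, if v - b = x then 1 else 0 := by
    rw [card_filter, Nat.cast_sum]
    refine sum_congr rfl fun v _ => ?_
    have hsub : ∀ b, v - b = x ↔ v - x = b := fun b => by
      constructor <;> rintro rfl <;> abel
    simp_rw [hsub, sum_ite_eq]
    split_ifs <;> simp
  calc (Fintype.card G : ℂ) * #{v ∈ V | v - x ∈ B}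
      = ∑ v ∈ V, ∑ b ∈ B, ∑ ψ : AddChar G ℂ, ψ v * conj (ψ b) * conj (ψ x) := by
        simp_rw [hcount, mul_sum, mul_boole, ← sum_apply_mul_conj_apply_dual, apply_mul_conj_apply]
    _ = ∑ ψ : AddChar G ℂ, ∑ v ∈ V, ∑ b ∈ B, ψ v * conj (ψ b) * conj (ψ x) :=
        (sum_congr rfl fun _ _ => sum_comm).trans sum_comm
    _ = _ := by simp_rw [map_sum, sum_mul_sum, sum_mul]

lemma sum_norm_sq_sum_apply (B : Finset G) :
    ∑ ψ : AddChar G ℂ, ‖∑ b ∈ B, ψ b‖ ^ 2 = Fintype.card G * #B := by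
  have h := sum_norm_sq_sum_mul_of_orthogonal (fun (b : G) (ψ : AddChar G ℂ) => ψ b)
    (Fintype.card G) (fun a b => by simp [sum_apply_mul_conj_apply_dual]) B 1
  simpa using h

lemma card_mul_card_filter_sub_mem_sub (V B : Finset G) (x : G) :
    (((Fintype.card G : ℝ) * (#{v ∈ V | v - x ∈ B} - #V * #B / Fintype.card G) : ℝ) : ℂ) =
      ∑ ψ ∈ (univ : Finset (AddChar G ℂ)).erase 0,
        (∑ v ∈ V, ψ v) * conj (∑ b ∈ B, ψ b) * conj (ψ x) := by
  have hG : (Fintype.card G : ℂ) ≠ 0 := Nat.cast_ne_zero.2 Fintype.card_ne_zero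
  push_cast
  rw [mul_sub, card_mul_card_filter_sub_mem, ← add_sum_erase _ _ (mem_univ 0),
    mul_div_cancel₀ _ hG]
  simp

theorem sum_sq_card_filter_sub_mem_sub_le (V B : Finset G) (K : ℝ)
    (hK : ∀ ψ : AddChar G ℂ, ψ ≠ 0 → ‖∑ v ∈ V, ψ v‖ ≤ K) :
    ∑ x, ((#{v ∈ V | v - x ∈ B} : ℝ) - #V * #B / Fintype.card G) ^ 2 ≤ K ^ 2 * #B := by
  have hn : (0 : ℝ) < Fintype.card G := Nat.cast_pos.2 Fintype.card_pos
  have hparseval := sum_norm_sq_sum_mul_of_orthogonal (fun (ψ : AddChar G ℂ) x => conj (ψ x))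
    (Fintype.card G)
    (fun ψ φ => by simpa [apply_ite conj] using congrArg conj (sum_apply_mul_conj_apply ψ φ))
    ((univ : Finset (AddChar G ℂ)).erase 0) fun ψ => (∑ v ∈ V, ψ v) * conj (∑ b ∈ B, ψ b)
  simp_rw [← card_mul_card_filter_sub_mem_sub, Complex.norm_real, Real.norm_eq_abs, sq_abs,
    mul_pow, ← mul_sum] at hparseval
  have hbound : ∑ ψ ∈ (univ : Finset (AddChar G ℂ)).erase 0,
      ‖(∑ v ∈ V, ψ v) * conj (∑ b ∈ B, ψ b)‖ ^ 2 ≤ K ^ 2 * (Fintype.card G * #B) := by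
    rw [← sum_norm_sq_sum_apply, mul_sum]
    calc _ ≤ ∑ ψ ∈ (univ : Finset (AddChar G ℂ)).erase 0, K ^ 2 * ‖∑ b ∈ B, ψ b‖ ^ 2 := by
          refine sum_le_sum fun ψ hψ => ?_
          rw [norm_mul, Complex.norm_conj, mul_pow]
          gcongr
          exact hK ψ (ne_of_mem_erase hψ)
      _ ≤ _ := sum_le_sum_of_subset_of_nonneg (erase_subset _ _) fun _ _ _ => by positivity
  refine le_of_mul_le_mul_left ?_ (pow_pos hn 2)
  calc _ ≤ _ := hparseval.le.trans (mul_le_mul_of_nonneg_left hbound hn.le)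
    _ = _ := by ring

end AddChar

lemma ep_eq_stdAddChar (p : ℕ) [NeZero p] (t : ZMod p) : ep p t = ZMod.stdAddChar t := by
  rw [ZMod.stdAddChar_apply, ZMod.toCircle_apply, ep]

lemma card_interval {p : ℕ} [NeZero p] (a : ZMod p) {L : ℕ} (hL : L ≤ p) :
    #(interval p a L) = L := by
  rw [interval, card_image_of_injOn, card_range]
  intro m hm k hk h
  simp only [coe_range, Set.mem_Iio] at hm hk
  have hval := congrArg ZMod.val (add_left_cancel h)
  rwa [ZMod.val_cast_of_lt (hm.trans_le hL), ZMod.val_cast_of_lt (hk.trans_le hL)] at hval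

namespace ZMod
variable {ι : Type*} [Fintype ι] {n : ℕ} [NeZero n]

noncomputable def dotProductChar (u : ι → ZMod n) : AddChar (ι → ZMod n) ℂ where
  toFun z := stdAddChar (u ⬝ᵥ z)
  map_zero_eq_one' := by simp
  map_add_eq_mul' z w := by simp [dotProduct_add, AddChar.map_add_eq_mul]

@[simp] lemma dotProductChar_apply (u z : ι → ZMod n) :
    dotProductChar u z = stdAddChar (u ⬝ᵥ z) := rfl

@[simp] lemma dotProductChar_zero : dotProductChar (0 : ι → ZMod n) = 0 := by
  ext; simp

lemma dotProductChar_injective : Function.Injective (dotProductChar : (ι → ZMod n) → _) := by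
  classical
  intro u w h
  funext i
  simpa using injective_stdAddChar (DFunLike.congr_fun h (Pi.single i 1))

lemma dotProductChar_bijective [DecidableEq ι] :
    Function.Bijective (dotProductChar : (ι → ZMod n) → _) := by
  rw [Fintype.bijective_iff_injective_and_card, AddChar.card_eq]
  exact ⟨dotProductChar_injective, rfl⟩

end ZMod

theorem stmt_10_general (p r : ℕ) [NeZero p]
    (V : Finset (Fin r → ZMod p)) (K : ℝ)
    (hK : ∀ u : Fin r → ZMod p, u ≠ 0 →
      ‖∑ z ∈ V, ep p (∑ i, u i * z i)‖ ≤ K)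
    (a : Fin r → ZMod p) (L : Fin r → ℕ) (hL : ∀ i, L i ≤ p) :
    ∑ x : Fin r → ZMod p,
        |((V.filter fun v => ∀ i, v i - x i ∈ interval p (a i) (L i)).card : ℝ) -
          (V.card : ℝ) * (∏ i, (L i : ℝ)) / (p : ℝ) ^ r| ^ 2 ≤
      K ^ 2 * ∏ i, (L i : ℝ) := by
  have hKchar : ∀ ψ : AddChar (Fin r → ZMod p) ℂ, ψ ≠ 0 → ‖∑ v ∈ V, ψ v‖ ≤ K := by
    intro ψ hψ
    obtain ⟨u, rfl⟩ := ZMod.dotProductChar_bijective.surjective ψ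
    have hu : u ≠ 0 := by rintro rfl; exact hψ ZMod.dotProductChar_zero
    simpa [ep_eq_stdAddChar, dotProduct] using hK u hu
  have hbox : (#(Fintype.piFinset fun i => interval p (a i) (L i)) : ℝ) = ∏ i, (L i : ℝ) := by
    simp [Fintype.card_piFinset, card_interval, hL]
  have h := AddChar.sum_sq_card_filter_sub_mem_sub_le V
    (Fintype.piFinset fun i => interval p (a i) (L i)) K hKchar
  simpa only [sq_abs, hbox, Fintype.mem_piFinset, Pi.sub_apply, Fintype.card_fun, ZMod.card,
    Fintype.card_fin, Nat.cast_pow] using h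

theorem stmt_10 (p r : ℕ) (hp : p.Prime) [NeZero p] (hr : 1 ≤ r)
    (V : Finset (Fin r → ZMod p)) (K : ℝ)
    (hK : ∀ u : Fin r → ZMod p, u ≠ 0 →
      ‖∑ z ∈ V, ep p (∑ i, u i * z i)‖ ≤ K)
    (a : Fin r → ZMod p) (L : Fin r → ℕ) (hL : ∀ i, L i ≤ p) :
    ∑ x : Fin r → ZMod p,
        |((V.filter fun v => ∀ i, v i - x i ∈ interval p (a i) (L i)).card : ℝ) -
          (V.card : ℝ) * (∏ i, (L i : ℝ)) / (p : ℝ) ^ r| ^ 2 ≤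
      K ^ 2 * ∏ i, (L i : ℝ) :=
  stmt_10_general p r V K hK a L hL
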